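/- With the resonator coefficients f = f_M as defined and g the multiplicative function supported on squarefree integers with g(p) = 1 + f(p)², for every ε > 0 one has Σ_{a ≤ M} Λ(a) f(a)/(√a · g(a)) ≪_ε (log M)^{1/2+ε} as M → ∞, where Λ is the von Mangoldt function. -/

import Mathlib

open Filter Finset
open scoped Classical

/-- `L = √(log M · log log M)` for the resonator parameter `M`. -/
noncomputable def resL (M : ℕ) : ℝ := Real.sqrt (Real.log M * Real.log (Real.log M))

/-- The value of the resonator coefficients at a prime `p`:
`f(p) = L/(√p log p)` if `L² ≤ p ≤ exp((log L)²)`, and `f(p) = 0` otherwise. -/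
noncomputable def resFp (M p : ℕ) : ℝ :=
  if resL M ^ 2 ≤ (p : ℝ) ∧ (p : ℝ) ≤ Real.exp (Real.log (resL M) ^ 2) then
    resL M / (Real.sqrt p * Real.log p)
  else 0

/-- The resonator coefficients `f = f_M`: the multiplicative function supported on squarefree
integers determined by its values `resFp` at primes. -/
noncomputable def resF (M n : ℕ) : ℝ :=
  if Squarefree n then ∏ p ∈ n.primeFactors, resFp M p else 0

/-- `Q₁ = Π_p (1 + f(p)² + f(p)/√p)`. -/
noncomputable def resQ1 (M : ℕ) : ℝ :=
  ∏ᶠ p ∈ {p : ℕ | p.Prime}, (1 + resFp M p ^ 2 + resFp M p / Real.sqrt p)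

/-- `Q₂ = Π_p (1 + f(p)²)`. -/
noncomputable def resQ2 (M : ℕ) : ℝ :=
  ∏ᶠ p ∈ {p : ℕ | p.Prime}, (1 + resFp M p ^ 2)

/-- The multiplicative function `g` supported on squarefree integers with `g(p) = 1 + f(p)²`. -/
noncomputable def resG (M n : ℕ) : ℝ :=
  if Squarefree n then ∏ p ∈ n.primeFactors, (1 + resFp M p ^ 2) else 0

/-! On a prime `p` the summand is at most `log p · f(p)/√p`, which is `L/p` for `p ≤ X := exp((log L)²)`
and `0` beyond; off the primes it vanishes, since a squarefree prime power is prime. Hence the sum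
is at most `L · Σ_{n ≤ X} 1/n ≤ L (1 + (log L)²)`, and with `u = log M`, `L = √(u log u)` this is
`O(√u (log u)³) = O(u^{1/2+ε})`. -/

open Real
open scoped ArithmeticFunction.vonMangoldt

lemma resL_nonneg (M : ℕ) : 0 ≤ resL M := sqrt_nonneg _

lemma resFp_nonneg (M p : ℕ) : 0 ≤ resFp M p := by
  unfold resFp
  split_ifs
  exacts [div_nonneg (resL_nonneg M) (by positivity), le_rfl]

lemma resF_nonneg (M n : ℕ) : 0 ≤ resF M n := by
  unfold resF
  split_ifs
  exacts [prod_nonneg fun p _ => resFp_nonneg M p, le_rfl]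

lemma resG_nonneg (M n : ℕ) : 0 ≤ resG M n := by
  unfold resG
  split_ifs
  exacts [prod_nonneg fun p _ => by positivity, le_rfl]

lemma resF_prime (M : ℕ) {p : ℕ} (hp : p.Prime) : resF M p = resFp M p := by
  simp only [resF, if_pos hp.squarefree, hp.primeFactors, prod_singleton]

lemma resG_prime (M : ℕ) {p : ℕ} (hp : p.Prime) : resG M p = 1 + resFp M p ^ 2 := by
  simp only [resG, if_pos hp.squarefree, hp.primeFactors, prod_singleton]

lemma vonMangoldt_mul_resF_of_not_prime (M : ℕ) {a : ℕ} (ha : ¬a.Prime) :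
    Λ a * resF M a = 0 := by
  by_cases hsq : Squarefree a
  · have hpp : ¬IsPrimePow a := fun hpp =>
      ha (Nat.squarefree_and_prime_pow_iff_prime.mp ⟨hsq, hpp⟩)
    rw [ArithmeticFunction.vonMangoldt_apply, if_neg hpp, zero_mul]
  · rw [resF, if_neg hsq, mul_zero]

lemma log_mul_resFp_div_sqrt_le (M : ℕ) {p : ℕ} (hp : p.Prime) :
    log p * resFp M p / √p ≤ if (p : ℝ) ≤ exp (log (resL M) ^ 2) then resL M / p else 0 := by
  have hp1 : (1 : ℝ) < p := by exact_mod_cast hp.one_lt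
  have hL := resL_nonneg M
  unfold resFp
  split_ifs with hrange hX
  · have hsqrt : √(p : ℝ) * √p = p := mul_self_sqrt (by positivity)
    have hlog : log p ≠ 0 := (log_pos hp1).ne'
    apply le_of_eq
    calc log p * (resL M / (√p * log p)) / √p = resL M / (√p * √p) := by field_simp
      _ = resL M / p := by rw [hsqrt]
  · exact absurd hrange.2 hX
  · rw [mul_zero, zero_div]
    positivity
  · rw [mul_zero, zero_div]

lemma resonator_term_le (M a : ℕ) :
    Λ a * resF M a / (√a * resG M a) ≤
      if (a : ℝ) ≤ exp (log (resL M) ^ 2) then resL M / a else 0 := by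
  by_cases ha : a.Prime
  · rw [resF_prime M ha, resG_prime M ha, ArithmeticFunction.vonMangoldt_apply_prime ha]
    refine le_trans ?_ (log_mul_resFp_div_sqrt_le M ha)
    have hsqrt : 0 < √(a : ℝ) := sqrt_pos.mpr (by exact_mod_cast ha.pos)
    have hnum : 0 ≤ log a * resFp M a := mul_nonneg (log_natCast_nonneg a) (resFp_nonneg M a)
    exact div_le_div_of_nonneg_left hnum hsqrt
      (le_mul_of_one_le_right hsqrt.le (le_add_of_nonneg_right (sq_nonneg _)))
  · rw [vonMangoldt_mul_resF_of_not_prime M ha, zero_div]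
    have := resL_nonneg M
    split_ifs <;> positivity

lemma sum_Icc_inv_floor_le {X : ℝ} (hX : 1 ≤ X) :
    ∑ n ∈ Icc 1 ⌊X⌋₊, (n : ℝ)⁻¹ ≤ 1 + log X := by
  have hN : (1 : ℝ) ≤ ⌊X⌋₊ := by exact_mod_cast Nat.le_floor (by exact_mod_cast hX)
  calc ∑ n ∈ Icc 1 ⌊X⌋₊, (n : ℝ)⁻¹ = harmonic ⌊X⌋₊ := by
        rw [harmonic_eq_sum_Icc]; push_cast; rfl
    _ ≤ 1 + log ⌊X⌋₊ := harmonic_le_one_add_log _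
    _ ≤ 1 + log X := by gcongr; exact Nat.floor_le (by linarith)

lemma resonator_sum_le (M : ℕ) :
    ∑ a ∈ Icc 1 M, Λ a * resF M a / (√a * resG M a) ≤ resL M * (1 + log (resL M) ^ 2) := by
  set X := exp (log (resL M) ^ 2)
  have hX : 1 ≤ X := one_le_exp (sq_nonneg _)
  have hL := resL_nonneg M
  calc ∑ a ∈ Icc 1 M, Λ a * resF M a / (√a * resG M a)
      ≤ ∑ a ∈ Icc 1 M, if (a : ℝ) ≤ X then resL M / a else 0 :=
        sum_le_sum fun a _ => resonator_term_le M a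
    _ = ∑ a ∈ (Icc 1 M).filter (fun a : ℕ => (a : ℝ) ≤ X), resL M / a := (sum_filter _ _).symm
    _ ≤ ∑ a ∈ Icc 1 ⌊X⌋₊, resL M / a := by
        refine sum_le_sum_of_subset_of_nonneg (fun a ha => ?_) fun a _ _ => by positivity
        simp only [mem_filter, mem_Icc] at ha ⊢
        exact ⟨ha.1.1, Nat.le_floor ha.2⟩
    _ = resL M * ∑ a ∈ Icc 1 ⌊X⌋₊, (a : ℝ)⁻¹ := by simp only [mul_sum, div_eq_mul_inv]
    _ ≤ resL M * (1 + log X) := mul_le_mul_of_nonneg_left (sum_Icc_inv_floor_le hX) hL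
    _ = resL M * (1 + log (resL M) ^ 2) := by rw [log_exp]

lemma sqrt_mul_log_mul_one_add_log_sq_le {u : ℝ} (hu : exp 1 ≤ u) :
    √(u * log u) * (1 + log √(u * log u) ^ 2) ≤ 2 * (√u * log u ^ 3) := by
  have hu0 : 0 < u := (exp_pos 1).trans_le hu
  set v := log u
  have hv : 1 ≤ v := (le_log_iff_exp_le hu0).mpr hu
  have hlogv : 0 ≤ log v ∧ log v ≤ v :=
    ⟨log_nonneg hv, (log_le_sub_one_of_pos (by linarith)).trans (by linarith)⟩
  have hsqrt : √(u * v) ≤ √u * v := by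
    rw [sqrt_mul hu0.le]
    gcongr
    exact sqrt_le_self_iff.mpr (Or.inr hv)
  have hlog : 1 + log √(u * v) ^ 2 ≤ 2 * v ^ 2 := by
    rw [log_sqrt (by positivity), log_mul hu0.ne' (by positivity)]
    nlinarith
  calc √(u * v) * (1 + log √(u * v) ^ 2) ≤ √u * v * (2 * v ^ 2) := by gcongr
    _ = 2 * (√u * v ^ 3) := by ring

lemma isBigO_sqrt_mul_log_mul_one_add_log_sq {ε : ℝ} (hε : 0 < ε) :
    (fun u : ℝ => √(u * log u) * (1 + log √(u * log u) ^ 2)) =O[atTop]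
      fun u => u ^ ((1 : ℝ) / 2 + ε) := by
  have hbound : (fun u : ℝ => √(u * log u) * (1 + log √(u * log u) ^ 2)) =O[atTop]
      fun u => √u * log u ^ 3 := by
    refine Asymptotics.IsBigO.of_bound 2 ?_
    filter_upwards [eventually_ge_atTop (exp 1)] with u hu
    have hv : 0 ≤ log u := log_nonneg ((one_le_exp zero_le_one).trans hu)
    rw [norm_of_nonneg (by positivity), norm_of_nonneg (by positivity)]
    exact sqrt_mul_log_mul_one_add_log_sq_le hu
  have hlog : (fun u : ℝ => log u ^ 3) =o[atTop] fun u => u ^ ε := by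
    simpa only [rpow_natCast] using isLittleO_log_rpow_rpow_atTop ((3 : ℕ) : ℝ) hε
  refine (hbound.trans ((Asymptotics.isBigO_refl _ _).mul hlog.isBigO)).congr' .rfl ?_
  filter_upwards [eventually_gt_atTop 0] with u hu
  rw [sqrt_eq_rpow, ← rpow_add hu]

/-- With the resonator coefficients `f = f_M` as defined and `g` the
multiplicative function supported on squarefree integers with `g(p) = 1 + f(p)²`, for every
`ε > 0` one has `Σ_{a ≤ M} Λ(a) f(a)/(√a g(a)) ≪_ε (log M)^{1/2+ε}` as `M → ∞`. -/
theorem resonator_vonMangoldt_sum (ε : ℝ) (hε : 0 < ε) :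
    (fun M : ℕ =>
        ∑ a ∈ Finset.Icc 1 M,
          ArithmeticFunction.vonMangoldt a * resF M a / (Real.sqrt a * resG M a))
      =O[atTop] fun M : ℕ => Real.log M ^ ((1 : ℝ) / 2 + ε) := by
  have hlog : Tendsto (fun M : ℕ => log M) atTop atTop :=
    tendsto_log_atTop.comp tendsto_natCast_atTop_atTop
  refine .trans (Asymptotics.isBigO_of_le (g := fun M : ℕ => resL M * (1 + log (resL M) ^ 2)) _
    fun M => ?_) ((isBigO_sqrt_mul_log_mul_one_add_log_sq hε).comp_tendsto hlog)
  have hsum : 0 ≤ ∑ a ∈ Icc 1 M, Λ a * resF M a / (√a * resG M a) := sum_nonneg fun a _ =>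
    div_nonneg (mul_nonneg ArithmeticFunction.vonMangoldt_nonneg (resF_nonneg M a))
      (mul_nonneg (sqrt_nonneg a) (resG_nonneg M a))
  rw [norm_of_nonneg hsum, norm_of_nonneg (hsum.trans (resonator_sum_le M))]
  exact resonator_sum_le M
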